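/- Let T be a tree on n vertices and u, v adjacent vertices of T. Form the shadow graph by replacing each of u, v with an edge (u₁u₂ and v₁v₂), joining each uᵢ to all neighbors of u other than v, each vⱼ to all neighbors of v other than u, and adding all four edges uᵢvⱼ. Then the number of proper k-colorings of this shadow graph equals k·(k-1)^{n-deg(u)-deg(v)+1}·(k-2)^{deg(u)+deg(v)-1}·(k-3). -/

import Mathlib

/-!
Every vertex of `T` outside `{u, v}` can be peeled off as a leaf, keeping a tree that contains
the edge `uv`. In the shadow graph such a leaf `ℓ` is simplicial: its neighbourhood is the single
vertex `q` when its neighbour `q` lies outside `{u, v}`, and the adjacent pair `q₁ q₂` otherwise.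
Deleting a simplicial vertex with `d` neighbours divides the number of `k`-colourings by `k - d`,
so each removal contributes a factor `k - 1` or `k - 2`, the latter exactly `deg u + deg v - 2`
times. What remains is the complete graph on `u₁, u₂, v₁, v₂`, with `k (k-1) (k-2) (k-3)`
colourings.
-/

/-- The number of proper `k`-colorings of a simple graph `G`. -/
noncomputable def numColorings {V : Type} (G : SimpleGraph V) (k : ℕ) : ℕ :=
  Nat.card {f : V → Fin k // ∀ u w, G.Adj u w → f u ≠ f w}

/-- The shadow graph `G_S`: each `v ∈ S` is replaced by an adjacent pair `v₁, v₂`, both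
joined to all neighbors of `v` not in `S`, and for every edge of `G` with both endpoints
in `S` all four edges between the corresponding pairs are added. -/
def multiShadow {V : Type} (G : SimpleGraph V) (S : Finset V) :
    SimpleGraph ({u : V // u ∉ S} ⊕ ({u : V // u ∈ S} × Bool)) :=
  SimpleGraph.fromRel (fun x y =>
    match x, y with
    | Sum.inl a, Sum.inl b => G.Adj a.1 b.1
    | Sum.inl a, Sum.inr (w, _) => G.Adj a.1 w.1
    | Sum.inr _, Sum.inl _ => False
    | Sum.inr (w, _), Sum.inr (x, _) => w = x ∨ G.Adj w.1 x.1)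

open SimpleGraph

section Colorings

variable {V W : Type}

lemma numColorings_congr {G : SimpleGraph V} {H : SimpleGraph W} (e : G ≃g H) (k : ℕ) :
    numColorings G k = numColorings H k :=
  Nat.card_congr
    { toFun := fun f => ⟨f.1 ∘ e.symm, fun _ _ h => f.2 _ _ (e.symm.map_adj_iff.2 h)⟩
      invFun := fun g => ⟨g.1 ∘ e, fun _ _ h => g.2 _ _ (e.map_adj_iff.2 h)⟩
      left_inv := fun f => by ext; simp
      right_inv := fun g => by ext; simp }

lemma numColorings_top [Fintype V] (k : ℕ) :
    numColorings (⊤ : SimpleGraph V) k = k.descFactorial (Fintype.card V) := by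
  classical
  calc numColorings (⊤ : SimpleGraph V) k = Nat.card (V ↪ Fin k) :=
        Nat.card_congr
          { toFun := fun f => ⟨f.1, fun a b hab => by_contra fun hne => f.2 a b hne hab⟩
            invFun := fun g => ⟨g, fun _ _ hne => g.injective.ne hne⟩
            left_inv := fun _ => rfl
            right_inv := fun _ => rfl }
    _ = k.descFactorial (Fintype.card V) := by
      rw [Nat.card_eq_fintype_card, Fintype.card_embedding_eq, Fintype.card_fin]

lemma numColorings_eq_sub_mul_induce_compl [Finite V] {G : SimpleGraph V} {w : V}
    (hw : G.IsClique (G.neighborSet w)) (k : ℕ) :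
    numColorings G k = (k - (G.neighborSet w).ncard) * numColorings (G.induce {w}ᶜ) k := by
  classical
  have := Fintype.ofFinite V
  set N : Set ({w}ᶜ : Set V) := {x | G.Adj w x}
  have hN : N.ncard = (G.neighborSet w).ncard :=
    Set.ncard_preimage_of_injective_subset_range Subtype.val_injective
      fun x hx => ⟨⟨x, (G.ne_of_adj hx).symm⟩, rfl⟩
  let e : {f : V → Fin k // ∀ a b, G.Adj a b → f a ≠ f b} ≃
      Σ g : {g : ({w}ᶜ : Set V) → Fin k // ∀ a b, (G.induce {w}ᶜ).Adj a b → g a ≠ g b},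
        ↥(g.1 '' N)ᶜ :=
    { toFun := fun f => ⟨⟨fun x => f.1 x, fun a b h => f.2 a b h⟩,
        ⟨f.1 w, fun ⟨x, hx, hfx⟩ => f.2 x w (G.adj_symm hx) hfx⟩⟩
      invFun := fun gc => ⟨fun x => if h : x = w then gc.2.1 else gc.1.1 ⟨x, h⟩, by
        intro a b hab
        by_cases ha : a = w <;> by_cases hb : b = w
        · exact absurd (ha.trans hb.symm) hab.ne
        · subst ha
          simpa [hb] using fun h => gc.2.2 ⟨⟨b, hb⟩, hab, h.symm⟩
        · subst hb
          simpa [ha] using fun h => gc.2.2 ⟨⟨a, ha⟩, hab.symm, h⟩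
        · simpa [ha, hb] using gc.1.2 ⟨a, ha⟩ ⟨b, hb⟩ hab⟩
      left_inv := fun f => by
        ext x
        by_cases hx : x = w
        · subst hx; simp
        · simp [hx]
      right_inv := fun gc =>
        Sigma.subtype_ext (Subtype.ext (funext fun x => dif_neg x.2)) (dif_pos rfl) }
  have hfiber (g : {g : ({w}ᶜ : Set V) → Fin k // ∀ a b, (G.induce {w}ᶜ).Adj a b → g a ≠ g b}) :
      Nat.card ↥(g.1 '' N)ᶜ = k - (G.neighborSet w).ncard := by
    have hinj : N.InjOn g.1 := fun x hx y hy hxy => by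
      by_contra hne
      exact g.2 x y (hw hx hy (Subtype.coe_ne_coe.mpr hne)) hxy
    rw [Nat.card_coe_set_eq, Set.ncard_compl, Nat.card_fin, hinj.ncard_image, hN]
  rw [numColorings, Nat.card_congr e, Nat.card_sigma, Finset.sum_congr rfl fun g _ => hfiber g,
    Finset.sum_const, Finset.card_univ, smul_eq_mul, mul_comm, numColorings,
    Nat.card_eq_fintype_card]

end Colorings

section multiShadow

variable {V : Type} {G : SimpleGraph V} {S : Finset V}

@[simp]
lemma multiShadow_adj_inl_inl (a b : {x // x ∉ S}) :
    (multiShadow G S).Adj (.inl a) (.inl b) ↔ G.Adj a b := by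
  simp only [multiShadow, fromRel_adj, ne_eq, Sum.inl.injEq, G.adj_comm b]
  exact ⟨fun h => h.2.elim id id, fun h => ⟨fun hab => G.irrefl (hab ▸ h), .inl h⟩⟩

@[simp]
lemma multiShadow_adj_inl_inr (a : {x // x ∉ S}) (w : S) (i : Bool) :
    (multiShadow G S).Adj (.inl a) (.inr (w, i)) ↔ G.Adj a w := by
  simp [multiShadow]

@[simp]
lemma multiShadow_adj_inr_inl (a : {x // x ∉ S}) (w : S) (i : Bool) :
    (multiShadow G S).Adj (.inr (w, i)) (.inl a) ↔ G.Adj a w := by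
  rw [adj_comm, multiShadow_adj_inl_inr]

@[simp]
lemma multiShadow_adj_inr_inr (w x : S) (i j : Bool) :
    (multiShadow G S).Adj (.inr (w, i)) (.inr (x, j)) ↔ (w, i) ≠ (x, j) ∧ (w = x ∨ G.Adj w x) := by
  simp only [multiShadow, fromRel_adj, ne_eq, Sum.inr.injEq, G.adj_comm x, eq_comm (a := x)]
  tauto

def multiShadowIsoTop (hS : ∀ x, x ∈ S) (hG : G.IsClique S) :
    multiShadow G S ≃g (⊤ : SimpleGraph (S × Bool)) where
  toEquiv := @Equiv.emptySum _ _ ⟨fun x => x.2 (hS x)⟩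
  map_rel_iff' := by
    have : IsEmpty {x // x ∉ S} := ⟨fun x => x.2 (hS x)⟩
    rintro (a | ⟨w, i⟩) (b | ⟨x, j⟩)
    · exact isEmptyElim a
    · exact isEmptyElim a
    · exact isEmptyElim b
    · simp only [Equiv.emptySum_apply_inr, top_adj, multiShadow_adj_inr_inr, iff_self_and]
      intro _
      by_cases hwx : w = x
      · exact .inl hwx
      · exact .inr (hG w.2 x.2 (Subtype.coe_ne_coe.mpr hwx))

def multiShadowInduceComplIso {ℓ : V} (hℓ : ℓ ∉ S) (S' : Finset ({ℓ}ᶜ : Set V))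
    (hS' : ∀ x, x ∈ S' ↔ x.1 ∈ S) :
    (multiShadow G S).induce {.inl ⟨ℓ, hℓ⟩}ᶜ ≃g multiShadow (G.induce {ℓ}ᶜ) S' where
  toFun
    | ⟨.inl a, ha⟩ => .inl ⟨⟨a, fun h => ha (congrArg _ (Subtype.ext h))⟩,
        fun h => a.2 ((hS' _).1 h)⟩
    | ⟨.inr (w, i), _⟩ => .inr (⟨⟨w, fun h => hℓ (h ▸ w.2)⟩, (hS' _).2 w.2⟩, i)
  invFun
    | .inl b => ⟨.inl ⟨b.1, fun h => b.2 ((hS' _).2 h)⟩,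
        fun h => b.1.2 (congrArg Subtype.val (Sum.inl_injective h))⟩
    | .inr (w, i) => ⟨.inr (⟨w.1, (hS' _).1 w.2⟩, i), Sum.inr_ne_inl⟩
  left_inv := by rintro ⟨a | ⟨w, i⟩, _⟩ <;> rfl
  right_inv := by rintro (b | ⟨w, i⟩) <;> rfl
  map_rel_iff' := by
    rintro ⟨a | ⟨w, i⟩, _⟩ ⟨b | ⟨x, j⟩, _⟩ <;>
      simp only [Equiv.coe_fn_mk, comap_adj, Function.Embedding.coe_subtype,
        multiShadow_adj_inl_inl, multiShadow_adj_inl_inr, multiShadow_adj_inr_inl,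
        multiShadow_adj_inr_inr]
    simp only [ne_eq, Prod.mk.injEq, Subtype.mk.injEq, ← Subtype.ext_iff]

lemma multiShadow_neighborSet_inl_of_notMem {ℓ q : V} (hℓ : ℓ ∉ S)
    (hN : G.neighborSet ℓ = {q}) (hq : q ∉ S) :
    (multiShadow G S).neighborSet (.inl ⟨ℓ, hℓ⟩) = {.inl ⟨q, hq⟩} := by
  simp only [Set.ext_iff, mem_neighborSet, Set.mem_singleton_iff] at hN
  ext (b | ⟨w, i⟩)
  · simp [hN, Subtype.ext_iff]
  · simpa [hN] using fun h : (w : V) = q => hq (h ▸ w.2)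

lemma multiShadow_neighborSet_inl_of_mem {ℓ q : V} (hℓ : ℓ ∉ S)
    (hN : G.neighborSet ℓ = {q}) (hq : q ∈ S) :
    (multiShadow G S).neighborSet (.inl ⟨ℓ, hℓ⟩) =
      {.inr (⟨q, hq⟩, true), .inr (⟨q, hq⟩, false)} := by
  simp only [Set.ext_iff, mem_neighborSet, Set.mem_singleton_iff] at hN
  ext (b | ⟨w, i⟩)
  · simpa [hN] using fun h : (b : V) = q => b.2 (h ▸ hq)
  · cases i <;> simp [hN, Subtype.ext_iff]

lemma numColorings_multiShadow_of_leaf_of_notMem [Finite V] {ℓ q : V} (hℓ : ℓ ∉ S)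
    (hN : G.neighborSet ℓ = {q}) (hq : q ∉ S) (S' : Finset ({ℓ}ᶜ : Set V))
    (hS' : ∀ x, x ∈ S' ↔ x.1 ∈ S) (k : ℕ) :
    numColorings (multiShadow G S) k =
      (k - 1) * numColorings (multiShadow (G.induce {ℓ}ᶜ) S') k := by
  have hNℓ := multiShadow_neighborSet_inl_of_notMem hℓ hN hq
  rw [numColorings_eq_sub_mul_induce_compl (hNℓ ▸ isClique_singleton _), hNℓ,
    Set.ncard_singleton, numColorings_congr (multiShadowInduceComplIso hℓ S' hS')]

lemma numColorings_multiShadow_of_leaf_of_mem [Finite V] {ℓ q : V} (hℓ : ℓ ∉ S)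
    (hN : G.neighborSet ℓ = {q}) (hq : q ∈ S) (S' : Finset ({ℓ}ᶜ : Set V))
    (hS' : ∀ x, x ∈ S' ↔ x.1 ∈ S) (k : ℕ) :
    numColorings (multiShadow G S) k =
      (k - 2) * numColorings (multiShadow (G.induce {ℓ}ᶜ) S') k := by
  have hNℓ := multiShadow_neighborSet_inl_of_mem hℓ hN hq
  rw [numColorings_eq_sub_mul_induce_compl (hNℓ ▸ isClique_pair.2 fun _ => by simp), hNℓ,
    Set.ncard_pair (by simp), numColorings_congr (multiShadowInduceComplIso hℓ S' hS')]

end multiShadow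

namespace SimpleGraph

variable {V : Type} {G : SimpleGraph V}

lemma IsAcyclic.ncard_neighborSet_add_ncard_neighborSet_le [Finite V] (hG : G.IsAcyclic)
    {u v : V} (huv : G.Adj u v) :
    (G.neighborSet u).ncard + (G.neighborSet v).ncard ≤ Nat.card V := by
  classical
  have hdisj : Disjoint (G.neighborSet u) (G.neighborSet v) :=
    Set.disjoint_left.2 fun x hux hvx =>
      hG.cliqueFree le_rfl {u, v, x} (is3Clique_triple_iff.2 ⟨huv, hux, hvx⟩)
  rw [← Set.ncard_union_eq hdisj]
  exact Set.ncard_le_card _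

lemma IsTree.eq_or_eq_of_subsingleton_neighborSet (hG : G.IsTree) {u v : V} (huv : G.Adj u v)
    (hu : (G.neighborSet u).Subsingleton) (hv : (G.neighborSet v).Subsingleton) (w : V) :
    w = u ∨ w = v := by
  by_contra! hw
  obtain ⟨p, hp⟩ := hG.connected.exists_isPath w u
  have hnil := p.not_nil_of_ne hw.1
  have hpen : p.penultimate = v := hu (p.adj_penultimate hnil).symm huv
  exact hp.isTrail.not_mem_support_of_subsingleton_neighborSet hw.2.symm huv.ne' hv
    (hpen ▸ p.getVert_mem_support _)

lemma IsTree.exists_leaf_ne_ne [Fintype V] (hG : G.IsTree) {u v : V} (huv : G.Adj u v)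
    (hcard : 3 ≤ Fintype.card V) :
    ∃ ℓ q, ℓ ≠ u ∧ ℓ ≠ v ∧ G.neighborSet ℓ = {q} := by
  classical
  have : Nontrivial V := Fintype.one_lt_card_iff_nontrivial.1 (by omega)
  obtain ⟨a, b, hab, ha, hb⟩ := hG.exists_ne_and_degree_eq_one
  have hleaf : ∀ x, G.degree x = 1 → ∃ q, G.neighborSet x = {q} := fun x hx => by
    rwa [← card_neighborSet_eq_degree, ← Nat.card_eq_fintype_card, Nat.card_coe_set_eq,
      Set.ncard_eq_one] at hx
  have hsub : ∀ x, G.degree x = 1 → (G.neighborSet x).Subsingleton := fun x hx => by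
    obtain ⟨q, hq⟩ := hleaf x hx
    exact hq ▸ Set.subsingleton_singleton
  by_cases haS : a ≠ u ∧ a ≠ v
  · exact ⟨a, (hleaf a ha).imp fun q hq => ⟨haS.1, haS.2, hq⟩⟩
  by_cases hbS : b ≠ u ∧ b ≠ v
  · exact ⟨b, (hleaf b hb).imp fun q hq => ⟨hbS.1, hbS.2, hq⟩⟩
  obtain ⟨hu, hv⟩ : (G.neighborSet u).Subsingleton ∧ (G.neighborSet v).Subsingleton := by
    have ha' : a = u ∨ a = v := by tauto
    have hb' : b = u ∨ b = v := by tauto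
    rcases ha' with rfl | rfl <;> rcases hb' with rfl | rfl <;> simp_all
  obtain ⟨w, -, hw⟩ := Finset.exists_mem_notMem_of_card_lt_card (s := {u, v}) (t := .univ)
    (Finset.card_le_two.trans_lt (by rw [Finset.card_univ]; omega))
  simp only [Finset.mem_insert, Finset.mem_singleton] at hw
  exact (hw (hG.eq_or_eq_of_subsingleton_neighborSet huv hu hv w)).elim

lemma IsTree.induce_compl_singleton_of_neighborSet_eq (hG : G.IsTree) {ℓ q : V}
    (hN : G.neighborSet ℓ = {q}) : (G.induce {ℓ}ᶜ).IsTree := by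
  have hq : q ∈ ({ℓ}ᶜ : Set V) := (G.ne_of_adj (hN.symm ▸ rfl : q ∈ G.neighborSet ℓ)).symm
  refine ⟨?_, hG.isAcyclic.induce _⟩
  have : Nonempty ({ℓ}ᶜ : Set V) := ⟨⟨q, hq⟩⟩
  refine ⟨hG.connected.preconnected.induce_of_degree_eq_one fun x hx => ?_⟩
  rw [Set.notMem_compl_iff.1 hx, hN]
  exact Set.subsingleton_singleton

lemma ncard_neighborSet_induce_compl_singleton (G : SimpleGraph V) (ℓ : V)
    (x : ({ℓ}ᶜ : Set V)) :
    ((G.induce {ℓ}ᶜ).neighborSet x).ncard = (G.neighborSet x \ {ℓ}).ncard := by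
  rw [← Set.ncard_image_of_injective _ Subtype.val_injective]
  congr 1
  ext y
  simp

lemma ncard_neighborSet_induce_compl_singleton_of_ne {ℓ q : V} (hN : G.neighborSet ℓ = {q})
    (x : ({ℓ}ᶜ : Set V)) (hx : x.1 ≠ q) :
    ((G.induce {ℓ}ᶜ).neighborSet x).ncard = (G.neighborSet x).ncard := by
  rw [ncard_neighborSet_induce_compl_singleton, Set.sdiff_singleton_eq_self]
  intro hℓx
  apply hx
  rw [← Set.mem_singleton_iff, ← hN]
  exact G.adj_symm hℓx

lemma ncard_neighborSet_induce_compl_singleton_add_one [Finite V] {ℓ q : V}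
    (hN : G.neighborSet ℓ = {q}) (hq : q ∈ ({ℓ}ᶜ : Set V)) :
    ((G.induce {ℓ}ᶜ).neighborSet ⟨q, hq⟩).ncard + 1 = (G.neighborSet q).ncard := by
  rw [ncard_neighborSet_induce_compl_singleton, Set.ncard_sdiff_singleton_add_one]
  exact G.adj_symm (hN.symm ▸ rfl : q ∈ G.neighborSet ℓ)

lemma ncard_neighborSet_induce_compl_singleton_add_add_one [Finite V] {ℓ q u v : V}
    (hN : G.neighborSet ℓ = {q}) (hu : u ∈ ({ℓ}ᶜ : Set V)) (hv : v ∈ ({ℓ}ᶜ : Set V))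
    (huv : u ≠ v) (hq : q = u ∨ q = v) :
    ((G.induce {ℓ}ᶜ).neighborSet ⟨u, hu⟩).ncard + ((G.induce {ℓ}ᶜ).neighborSet ⟨v, hv⟩).ncard + 1
      = (G.neighborSet u).ncard + (G.neighborSet v).ncard := by
  rcases hq with rfl | rfl
  · rw [ncard_neighborSet_induce_compl_singleton_of_ne hN ⟨v, hv⟩ huv.symm, add_right_comm,
      ncard_neighborSet_induce_compl_singleton_add_one hN]
  · rw [ncard_neighborSet_induce_compl_singleton_of_ne hN ⟨u, hu⟩ huv, add_assoc,
      ncard_neighborSet_induce_compl_singleton_add_one hN]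

lemma ncard_neighborSet_induce_compl_singleton_add {ℓ q u v : V}
    (hN : G.neighborSet ℓ = {q}) (hu : u ∈ ({ℓ}ᶜ : Set V)) (hv : v ∈ ({ℓ}ᶜ : Set V))
    (hqu : u ≠ q) (hqv : v ≠ q) :
    ((G.induce {ℓ}ᶜ).neighborSet ⟨u, hu⟩).ncard + ((G.induce {ℓ}ᶜ).neighborSet ⟨v, hv⟩).ncard
      = (G.neighborSet u).ncard + (G.neighborSet v).ncard := by
  rw [ncard_neighborSet_induce_compl_singleton_of_ne hN _ hqu,
    ncard_neighborSet_induce_compl_singleton_of_ne hN _ hqv]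

end SimpleGraph

/-- The right-hand side of the theorem, with `n = |V(T)|` and `d = deg u + deg v`. -/
def shadowPairCount (k n d : ℕ) : ℕ :=
  k * (k - 1) ^ (n + 1 - d) * (k - 2) ^ (d - 1) * (k - 3)

lemma shadowPairCount_two_two (k : ℕ) : shadowPairCount k 2 2 = k.descFactorial 4 := by
  simp only [shadowPairCount, Nat.descFactorial, Nat.sub_zero]
  ring

lemma sub_one_mul_shadowPairCount {k n d : ℕ} (h : d ≤ n) :
    (k - 1) * shadowPairCount k n d = shadowPairCount k (n + 1) d := by
  rw [shadowPairCount, shadowPairCount, show n + 1 + 1 - d = n + 1 - d + 1 by omega, pow_succ]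
  ring

lemma sub_two_mul_shadowPairCount {k n d : ℕ} (h : 1 ≤ d) :
    (k - 2) * shadowPairCount k n d = shadowPairCount k (n + 1) (d + 1) := by
  rw [shadowPairCount, shadowPairCount, show n + 1 + 1 - (d + 1) = n + 1 - d by omega,
    show d + 1 - 1 = d - 1 + 1 by omega, pow_succ]
  ring

section Pair

variable {V : Type} [Fintype V] [DecidableEq V] {T : SimpleGraph V}

lemma numColorings_multiShadow_pair_of_card_eq_two (hT : T.IsAcyclic) {u v : V}
    (huv : T.Adj u v) (hcard : Fintype.card V = 2) (k : ℕ) :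
    numColorings (multiShadow T {u, v}) k =
      shadowPairCount k 2 ((T.neighborSet u).ncard + (T.neighborSet v).ncard) := by
  have hdu : 0 < (T.neighborSet u).ncard := (Set.ncard_pos (Set.toFinite _)).2 ⟨v, huv⟩
  have hdv : 0 < (T.neighborSet v).ncard := (Set.ncard_pos (Set.toFinite _)).2 ⟨u, huv.symm⟩
  have hD := hT.ncard_neighborSet_add_ncard_neighborSet_le huv
  rw [Nat.card_eq_fintype_card, hcard] at hD
  have huniv : ({u, v} : Finset V) = Finset.univ :=
    Finset.eq_univ_of_card _ (by rw [Finset.card_pair huv.ne, hcard])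
  have hclique : T.IsClique ({u, v} : Finset V) := by
    rw [Finset.coe_pair]
    exact isClique_pair.2 fun _ => huv
  rw [numColorings_congr (multiShadowIsoTop (fun x => huniv ▸ Finset.mem_univ x) hclique),
    numColorings_top, Fintype.card_prod, Fintype.card_coe, Finset.card_pair huv.ne,
    Fintype.card_bool, show (T.neighborSet u).ncard + (T.neighborSet v).ncard = 2 by omega,
    shadowPairCount_two_two]

lemma numColorings_multiShadow_pair_of_leaf (hT : T.IsAcyclic) {n k : ℕ}
    (hcard : Fintype.card V = n + 1) {u v ℓ q : V} (huv : T.Adj u v)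
    (hu : u ∈ ({ℓ}ᶜ : Set V)) (hv : v ∈ ({ℓ}ᶜ : Set V)) (hN : T.neighborSet ℓ = {q})
    (ih : numColorings (multiShadow (T.induce {ℓ}ᶜ) {⟨u, hu⟩, ⟨v, hv⟩}) k =
      shadowPairCount k n (((T.induce {ℓ}ᶜ).neighborSet ⟨u, hu⟩).ncard +
        ((T.induce {ℓ}ᶜ).neighborSet ⟨v, hv⟩).ncard)) :
    numColorings (multiShadow T {u, v}) k =
      shadowPairCount k (n + 1) ((T.neighborSet u).ncard + (T.neighborSet v).ncard) := by
  have hℓ : ℓ ∉ ({u, v} : Finset V) := by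
    simp only [Finset.mem_insert, Finset.mem_singleton, not_or]
    exact ⟨fun h => hu (h ▸ rfl), fun h => hv (h ▸ rfl)⟩
  have hS' : ∀ x : ({ℓ}ᶜ : Set V),
      x ∈ ({⟨u, hu⟩, ⟨v, hv⟩} : Finset _) ↔ x.1 ∈ ({u, v} : Finset V) := by
    simp [Subtype.ext_iff]
  have huv' : (T.induce {ℓ}ᶜ).Adj ⟨u, hu⟩ ⟨v, hv⟩ := huv
  by_cases hq : q ∈ ({u, v} : Finset V)
  · have hdu' : 0 < ((T.induce {ℓ}ᶜ).neighborSet ⟨u, hu⟩).ncard :=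
      (Set.ncard_pos (Set.toFinite _)).2 ⟨_, huv'⟩
    rw [numColorings_multiShadow_of_leaf_of_mem hℓ hN hq _ hS', ih,
      sub_two_mul_shadowPairCount (by omega),
      ncard_neighborSet_induce_compl_singleton_add_add_one hN hu hv huv.ne (by simpa using hq)]
  · have hD' := (hT.induce _).ncard_neighborSet_add_ncard_neighborSet_le huv'
    rw [Nat.card_eq_fintype_card, Fintype.card_compl_set, hcard, Fintype.card_unique,
      Nat.add_sub_cancel] at hD'
    rw [numColorings_multiShadow_of_leaf_of_notMem hℓ hN hq _ hS', ih,
      sub_one_mul_shadowPairCount hD',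
      ncard_neighborSet_induce_compl_singleton_add hN hu hv (by rintro rfl; simp at hq)
        (by rintro rfl; simp at hq)]

end Pair

/-- For a tree `T` on `n` vertices and adjacent vertices `u, v`, the shadow graph on
`{u, v}` (each of `u, v` replaced by an adjacent pair joined to its other neighbors,
with all four cross edges) has exactly
`k·(k-1)^{n-deg(u)-deg(v)+1}·(k-2)^{deg(u)+deg(v)-1}·(k-3)` proper `k`-colorings. -/
theorem tree_shadow_adjacent_pair {V : Type} [Fintype V] [DecidableEq V]
    (T : SimpleGraph V) (hT : T.IsTree) (n : ℕ) (hn : Fintype.card V = n)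
    (u v : V) (huv : T.Adj u v) (k : ℕ) :
    numColorings (multiShadow T {u, v}) k =
      k * (k - 1) ^ (n + 1 - ((T.neighborSet u).ncard + (T.neighborSet v).ncard)) *
        (k - 2) ^ ((T.neighborSet u).ncard + (T.neighborSet v).ncard - 1) * (k - 3) := by
  change _ = shadowPairCount k n _
  induction n generalizing V with
  | zero => exact absurd hn (Fintype.card_pos_iff.2 ⟨u⟩).ne'
  | succ n ih =>
    have hcard : 2 ≤ n + 1 := hn ▸ Finset.card_pair huv.ne ▸ Finset.card_le_univ _
    obtain h2 | h3 : n + 1 = 2 ∨ 3 ≤ n + 1 := by omega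
    · exact h2 ▸ numColorings_multiShadow_pair_of_card_eq_two hT.isAcyclic huv (hn.trans h2) k
    obtain ⟨ℓ, q, hℓu, hℓv, hN⟩ := hT.exists_leaf_ne_ne huv (hn ▸ h3)
    have hu : u ∈ ({ℓ}ᶜ : Set V) := Set.mem_compl_singleton_iff.2 hℓu.symm
    have hv : v ∈ ({ℓ}ᶜ : Set V) := Set.mem_compl_singleton_iff.2 hℓv.symm
    refine numColorings_multiShadow_pair_of_leaf hT.isAcyclic hn huv hu hv hN
      (ih _ (hT.induce_compl_singleton_of_neighborSet_eq hN) ?_ _ _ huv)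
    rw [Fintype.card_compl_set, hn, Fintype.card_unique, Nat.add_sub_cancel]
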